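/- arXiv:1109.0392 — 2 statements merged into one kernel-verified Lean document; each statement's English description precedes it below -/
import Mathlib

section
/- Let μ be the Gaussian mixture probability measure on ℝ with density g(y) = Σ_{x=1}^k π_x φ_{m_x,σ²}(y), where σ² > 0, π_x > 0 and Σ_{x=1}^k π_x = 1, and let c ∈ (0, 1]. Then inf { Var(μ ∣ I) : I an interval of ℝ with μ(I) ≥ c } > 0. -/
/-!
Each Gaussian component has density at most `M = (2πσ²)^{-1/2}`, hence so does the mixture `μ`,
and conditioning on a set `I` with `μ(I) ≥ c` gives a probability measure of density at most
`M / c`. Such a measure puts mass at most `1/2` on the interval of radius `r = c / (4M)` around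
its mean, so by Chebyshev its variance is at least `r² / 2 = c² / (32 M²)`; it is finite
because Gaussians have second moments.
-/

open MeasureTheory ProbabilityTheory Real
open scoped NNReal ENNReal

lemma gaussianPDFReal_le_inv_sqrt (m : ℝ) (v : ℝ≥0) (x : ℝ) :
    gaussianPDFReal m v x ≤ (√(2 * π * v))⁻¹ :=
  mul_le_of_le_one_right (by positivity) <| Real.exp_le_one_iff.2 <|
    div_nonpos_of_nonpos_of_nonneg (neg_nonpos.2 (sq_nonneg _)) (by positivity)

lemma gaussianReal_le_smul_volume (m : ℝ) {v : ℝ≥0} (hv : v ≠ 0) :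
    gaussianReal m v ≤ ENNReal.ofReal (√(2 * π * v))⁻¹ • volume := by
  rw [gaussianReal_of_var_ne_zero m hv, ← withDensity_const]
  exact withDensity_mono <| ae_of_all _ fun x ↦
    ENNReal.ofReal_le_ofReal (gaussianPDFReal_le_inv_sqrt m v x)

section Mixture

variable {α ι : Type*} [MeasurableSpace α] {s : Finset ι} {w : ι → ℝ≥0∞} {ν : ι → Measure α}

lemma MeasureTheory.Measure.finsetSum_smul_le_smul {ρ : Measure α} {K : ℝ≥0∞}
    (h : ∀ i ∈ s, ν i ≤ K • ρ) : ∑ i ∈ s, w i • ν i ≤ (∑ i ∈ s, w i) • K • ρ := by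
  rw [Finset.sum_smul]
  exact Finset.sum_le_sum fun i hi ↦ smul_le_smul_left (w i) (h i hi)

lemma isProbabilityMeasure_finsetSum_smul (hw : ∑ i ∈ s, w i = 1)
    (hν : ∀ i ∈ s, IsProbabilityMeasure (ν i)) : IsProbabilityMeasure (∑ i ∈ s, w i • ν i) := by
  constructor
  rw [Measure.finsetSum_apply, ← hw]
  exact Finset.sum_congr rfl fun i hi ↦ by simp [(hν i hi).measure_univ]

lemma memLp_two_finsetSum_smul {f : α → ℝ} (hf : Measurable f) (hw : ∀ i ∈ s, w i ≠ ∞)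
    (hν : ∀ i ∈ s, MemLp f 2 (ν i)) : MemLp f 2 (∑ i ∈ s, w i • ν i) := by
  rw [memLp_two_iff_integrable_sq hf.aestronglyMeasurable, integrable_finsetSum_measure]
  intro i hi
  exact ((memLp_two_iff_integrable_sq hf.aestronglyMeasurable).1 (hν i hi)).smul_measure (hw i hi)

end Mixture

lemma ProbabilityTheory.cond_le_inv_smul {α : Type*} [MeasurableSpace α] (μ : Measure α)
    (s : Set α) : μ[|s] ≤ (μ s)⁻¹ • μ :=
  smul_le_smul_left _ Measure.restrict_le_self

lemma MeasureTheory.MemLp.cond {α E : Type*} [MeasurableSpace α] [NormedAddCommGroup E]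
    {μ : Measure α} {f : α → E} {p : ℝ≥0∞} {s : Set α} (hf : MemLp f p μ) (hs : μ s ≠ 0) :
    MemLp f p μ[|s] :=
  hf.of_measure_le_smul (ENNReal.inv_ne_top.2 hs) (cond_le_inv_smul μ s)

lemma one_div_sq_le_variance_id {ν : Measure ℝ} [IsProbabilityMeasure ν] (hν : MemLp id 2 ν)
    {K : ℝ} (hK : 0 < K) (hνK : ν ≤ ENNReal.ofReal K • volume) :
    1 / (32 * K ^ 2) ≤ variance id ν := by
  set r := 1 / (4 * K)
  have hr : 0 < r := by positivity
  set far := {x : ℝ | r ≤ |id x - ν[id]|}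
  have hnear : ν farᶜ ≤ ENNReal.ofReal (1 / 2) := calc
    ν farᶜ ≤ ν (Metric.ball ν[id] r) :=
        measure_mono fun x hx ↦ by simpa [far, Real.dist_eq] using hx
    _ ≤ ENNReal.ofReal K * volume (Metric.ball ν[id] r) := hνK _
    _ = ENNReal.ofReal (1 / 2) := by
        rw [Real.volume_ball, ← ENNReal.ofReal_mul hK.le]
        congr 1
        simp only [r]
        field_simp
        ring
  have hfar : ν far ≤ ENNReal.ofReal (variance id ν / r ^ 2) := meas_ge_le_variance_div_sq hν hr
  have hhalf : 1 ≤ variance id ν / r ^ 2 + 1 / 2 := by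
    rw [← ENNReal.one_le_ofReal,
      ENNReal.ofReal_add (by positivity [variance_nonneg id ν]) (by norm_num),
      ← measure_univ (μ := ν)]
    exact (measure_univ_le_add_compl far).trans (add_le_add hfar hnear)
  rw [div_add' _ _ _ (by positivity), le_div_iff₀ (by positivity)] at hhalf
  calc 1 / (32 * K ^ 2) = r ^ 2 / 2 := by simp only [r]; field_simp; ring
    _ ≤ variance id ν := by linarith

lemma sq_div_le_variance_cond {μ : Measure ℝ} [IsFiniteMeasure μ] (hμ : MemLp id 2 μ) {M : ℝ}
    (hM : 0 < M) (hμM : μ ≤ ENNReal.ofReal M • volume) {s : Set ℝ} {c : ℝ} (hc : 0 < c)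
    (hcs : c ≤ μ.real s) : c ^ 2 / (32 * M ^ 2) ≤ variance id μ[|s] := by
  have hcs' : ENNReal.ofReal c ≤ μ s := ENNReal.ofReal_le_of_le_toReal hcs
  have hs : μ s ≠ 0 := (ENNReal.ofReal_pos.2 hc).trans_le hcs' |>.ne'
  have := cond_isProbabilityMeasure (μ := μ) hs
  have hdens : μ[|s] ≤ ENNReal.ofReal (M / c) • volume := calc
    μ[|s] ≤ (μ s)⁻¹ • ENNReal.ofReal M • volume :=
        (cond_le_inv_smul μ s).trans (smul_le_smul_left _ hμM)
    _ ≤ ENNReal.ofReal (M / c) • volume := by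
        rw [smul_smul, div_eq_inv_mul, ENNReal.ofReal_mul (by positivity),
          ENNReal.ofReal_inv_of_pos hc]
        exact IsOrderedSMul.smul_le_smul_right _ _ (by gcongr) _
  convert one_div_sq_le_variance_id (hμ.cond hs) (div_pos hM hc) hdens using 1
  field_simp

theorem inf_condVar_interval_pos_general
    (k : ℕ) (σ2 : ℝ) (hσ2 : 0 < σ2) (m : Fin k → ℝ)
    (π' : Fin k → ℝ) (hπ : ∀ x, 0 < π' x) (hπsum : ∑ x, π' x = 1)
    (μ : Measure ℝ)
    (hμ : μ = ∑ x, ENNReal.ofReal (π' x) • gaussianReal (m x) (⟨σ2, hσ2.le⟩ : ℝ≥0))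
    (c : ℝ) (hc0 : 0 < c) (hc1 : c ≤ 1) :
    0 < sInf {v : ℝ | ∃ I : Set ℝ, I.OrdConnected ∧ c ≤ (μ I).toReal ∧
      v = variance id (μ[|I])} := by
  have hw : ∑ x, ENNReal.ofReal (π' x) = 1 := by
    rw [← ENNReal.ofReal_sum_of_nonneg fun x _ ↦ (hπ x).le, hπsum, ENNReal.ofReal_one]
  -- instance search does not find this instance at the variance `⟨σ2, _⟩`
  have : IsProbabilityMeasure μ := hμ ▸ isProbabilityMeasure_finsetSum_smul hw
    fun x _ ↦ instIsProbabilityMeasureGaussianReal _ _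
  have hμ2 : MemLp id 2 μ :=
    hμ ▸ memLp_two_finsetSum_smul measurable_id (fun _ _ ↦ ENNReal.ofReal_ne_top)
      fun x _ ↦ memLp_id_gaussianReal 2
  set M := (√(2 * π * σ2))⁻¹
  have hμM : μ ≤ ENNReal.ofReal M • volume := by
    rw [hμ, ← one_smul ℝ≥0∞ (ENNReal.ofReal M • volume), ← hw]
    exact Measure.finsetSum_smul_le_smul fun x _ ↦
      gaussianReal_le_smul_volume (m x) (ne_of_gt hσ2)
  refine (by positivity : 0 < c ^ 2 / (32 * M ^ 2)).trans_le <|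
    le_csInf ⟨_, Set.univ, Set.ordConnected_univ, by simpa using hc1, rfl⟩ ?_
  rintro _ ⟨I, -, hcI, rfl⟩
  exact sq_div_le_variance_cond hμ2 (by positivity) hμM hc0 hcI

/-- For a Gaussian mixture `μ` on `ℝ` and any `c ∈ (0,1]`, the infimum of the conditional
variances `Var(μ | I)` over all intervals `I` with `μ(I) ≥ c` is strictly positive. -/
theorem inf_condVar_interval_pos
    (k : ℕ) (hk : 1 ≤ k) (σ2 : ℝ) (hσ2 : 0 < σ2) (m : Fin k → ℝ)
    (π' : Fin k → ℝ) (hπ : ∀ x, 0 < π' x) (hπsum : ∑ x, π' x = 1)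
    (μ : Measure ℝ)
    (hμ : μ = ∑ x, ENNReal.ofReal (π' x) • gaussianReal (m x) (⟨σ2, hσ2.le⟩ : ℝ≥0))
    (c : ℝ) (hc0 : 0 < c) (hc1 : c ≤ 1) :
    0 < sInf {v : ℝ | ∃ I : Set ℝ, I.OrdConnected ∧ c ≤ (μ I).toReal ∧
      v = variance id (μ[|I])} :=
  inf_condVar_interval_pos_general k σ2 hσ2 m π' hπ hπsum μ hμ c hc0 hc1
end

section
/- Let (Ω, 𝓕, P) be a probability space, T : Ω → Ω an ergodic measure-preserving map, and f : Ω → ℝ measurable with law μ. For i ≥ 1 set Y_i = f ∘ T^{i−1}. Let 𝒢 be a family of Borel functions g : ℝ → ℝ, each μ-integrable, such that for every ε > 0 there exists a finite set B_ε of pairs (l, u) of μ-integrable Borel functions with ∫ (u − l) dμ ≤ ε for each pair, and such that every g ∈ 𝒢 satisfies l(x) ≤ g(x) ≤ u(x) for all x ∈ ℝ for some pair (l, u) ∈ B_ε. Then for P-almost every ω, sup_{g ∈ 𝒢} | (1/n) Σ_{i=1}^n g(Y_i(ω)) − ∫ g dμ | → 0 as n → ∞. -/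
open MeasureTheory ProbabilityTheory Filter
open scoped NNReal ENNReal Topology

/-!
Along almost every orbit, Birkhoff's ergodic theorem makes the sample means of the countably
many endpoints of brackets of width `1 / (k + 1)` converge. A function of `𝒢` lying in a bracket
`[l, u]` has its sample mean between those of `l` and `u` and its integral between theirs, so its
error is at most the error at the endpoints plus `∫ (u - l)`; as each bracketing is finite, this
bound is uniform over `𝒢`.

Birkhoff's theorem is derived from Garsia's maximal ergodic lemma: when `∫ g < 0`, the set where
the Birkhoff sums of `g` are unbounded above is invariant, and on it the maximal lemma would force
`∫ g ≥ 0`; by ergodicity it is therefore null.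
-/
section BirkhoffMax

open Finset

noncomputable def birkhoffMax {α : Type*} (T : α → α) (g : α → ℝ) (N : ℕ) (x : α) : ℝ :=
  (range (N + 1)).sup' nonempty_range_add_one fun k => birkhoffSum T g (k + 1) x

variable {α : Type*} {T : α → α} {g : α → ℝ}

lemma birkhoffSum_le_birkhoffMax {k N : ℕ} (hk : k ≤ N) (x : α) :
    birkhoffSum T g (k + 1) x ≤ birkhoffMax T g N x :=
  le_sup' (fun k => birkhoffSum T g (k + 1) x) (mem_range.2 (Nat.lt_succ_of_le hk))

lemma birkhoffMax_mono (x : α) : Monotone fun N => birkhoffMax T g N x := fun _ _ hMN =>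
  sup'_mono _ (range_subset_range.2 (Nat.succ_le_succ hMN)) _

lemma birkhoffMax_le_add (N : ℕ) (x : α) :
    birkhoffMax T g N x ≤ g x + max (birkhoffMax T g N (T x)) 0 := by
  refine sup'_le _ _ fun k hk => ?_
  rw [birkhoffSum_succ']
  gcongr
  cases k with
  | zero => simp
  | succ _ =>
    exact le_max_of_le_left
      (birkhoffSum_le_birkhoffMax (by simp only [mem_range] at hk; omega) (T x))

variable [MeasurableSpace α]

lemma measurable_birkhoffMax (hT : Measurable T) (hg : Measurable g) (N : ℕ) :
    Measurable (birkhoffMax T g N) :=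
  measurable_range_sup'' fun _ _ =>
    Finset.measurable_sum _ fun i _ => hg.comp (hT.iterate i)

lemma integrable_birkhoffMax {μ : Measure α} (hT : MeasurePreserving T μ μ)
    (hg : Integrable g μ) (N : ℕ) : Integrable (birkhoffMax T g N) μ := by
  have hsum (n : ℕ) : Integrable (birkhoffSum T g n) μ :=
    integrable_finsetSum _ fun i _ => (hT.iterate i).integrable_comp_of_integrable hg
  convert sup'_induction (p := fun F => Integrable F μ) (nonempty_range_add_one (n := N))
    (fun k => birkhoffSum T g (k + 1)) (fun _ h₁ _ h₂ => h₁.sup h₂) fun k _ => hsum (k + 1)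
    using 1
  ext x
  simp [birkhoffMax]

end BirkhoffMax

section Birkhoff

open Set

variable {α : Type*} {T : α → α} {g : α → ℝ}

lemma bddAbove_range_birkhoffSum_apply_iff (x : α) :
    BddAbove (range fun n => birkhoffSum T g n (T x)) ↔
      BddAbove (range fun n => birkhoffSum T g n x) := by
  simp only [bddAbove_def, forall_mem_range]
  constructor
  · rintro ⟨K, hK⟩
    refine ⟨max 0 (g x + K), fun n => ?_⟩
    cases n with
    | zero => simp
    | succ m =>
      rw [birkhoffSum_succ']
      exact le_max_of_le_right (by linarith [hK m])
  · rintro ⟨K, hK⟩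
    refine ⟨K - g x, fun n => ?_⟩
    have := hK (n + 1)
    rw [birkhoffSum_succ'] at this
    linarith

variable [MeasurableSpace α] {μ : Measure α}

/-- Garsia's maximal ergodic lemma. -/
theorem MeasureTheory.MeasurePreserving.setIntegral_birkhoffMax_pos_nonneg
    (hT : MeasurePreserving T μ μ) (hg : Measurable g) (hgi : Integrable g μ) (N : ℕ) :
    0 ≤ ∫ x in {x | 0 < birkhoffMax T g N x}, g x ∂μ := by
  set M := birkhoffMax T g N
  set E := {x | 0 < M x}
  have hM : Measurable M := measurable_birkhoffMax hT.measurable hg N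
  have hMpos : Integrable (fun x => max (M x) 0) μ :=
    (integrable_birkhoffMax hT hgi N).pos_part
  have hMposT : Integrable (fun x => max (M (T x)) 0) μ := hT.integrable_comp_of_integrable hMpos
  -- On `E` this is `M ≤ g + M⁺ ∘ T`; off `E` the left side is `-M⁺ ∘ T ≤ 0`.
  have hpointwise (x : α) : max (M x) 0 - max (M (T x)) 0 ≤ E.indicator g x := by
    by_cases hx : x ∈ E
    · have := birkhoffMax_le_add (T := T) (g := g) N x
      rw [indicator_of_mem hx, max_eq_left (le_of_lt hx)]
      linarith
    · rw [indicator_of_notMem hx, max_eq_right (not_lt.1 hx)]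
      linarith [le_max_right (M (T x)) 0]
  have hinvariant : ∫ x, max (M (T x)) 0 ∂μ = ∫ x, max (M x) 0 ∂μ := by
    rw [← integral_map hT.measurable.aemeasurable
      (hM.max measurable_const).aestronglyMeasurable, hT.map_eq]
  calc (0 : ℝ) = ∫ x, (max (M x) 0 - max (M (T x)) 0) ∂μ := by
        rw [integral_sub hMpos hMposT, hinvariant, sub_self]
    _ ≤ ∫ x, E.indicator g x ∂μ :=
        integral_mono (hMpos.sub hMposT)
          (hgi.indicator (measurableSet_lt measurable_const hM)) hpointwise
    _ = ∫ x in E, g x ∂μ := integral_indicator (measurableSet_lt measurable_const hM)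

theorem MeasureTheory.MeasurePreserving.integral_nonneg_of_ae_exists_birkhoffSum_pos
    (hT : MeasurePreserving T μ μ) (hg : Measurable g) (hgi : Integrable g μ)
    (hpos : ∀ᵐ x ∂μ, ∃ n, 0 < birkhoffSum T g n x) : 0 ≤ ∫ x, g x ∂μ := by
  set E := fun N => {x | 0 < birkhoffMax T g N x}
  have hE : ∀ N, MeasurableSet (E N) := fun N =>
    measurableSet_lt measurable_const (measurable_birkhoffMax hT.measurable hg N)
  have hmono : Monotone E := fun _ _ hMN _ hx => hx.trans_le (birkhoffMax_mono _ hMN)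
  have hcover : μ.restrict (⋃ N, E N) = μ := by
    refine Measure.restrict_eq_self_of_ae_mem ?_
    filter_upwards [hpos] with x ⟨n, hn⟩
    cases n with
    | zero => simp at hn
    | succ k => exact mem_iUnion.2 ⟨k, hn.trans_le (birkhoffSum_le_birkhoffMax le_rfl x)⟩
  have hlim := tendsto_setIntegral_of_monotone hE hmono (hcover.symm ▸ hgi)
  rw [hcover] at hlim
  exact ge_of_tendsto' hlim fun N => hT.setIntegral_birkhoffMax_pos_nonneg hg hgi N

theorem Ergodic.ae_bddAbove_birkhoffSum (hT : Ergodic T μ) (hg : Measurable g)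
    (hgi : Integrable g μ) (hneg : ∫ x, g x ∂μ < 0) :
    ∀ᵐ x ∂μ, BddAbove (range fun n => birkhoffSum T g n x) := by
  have hS (n : ℕ) : Measurable (birkhoffSum T g n) :=
    Finset.measurable_sum _ fun i _ => hg.comp (hT.measurable.iterate i)
  refine (hT.toPreErgodic.ae_mem_or_ae_notMem (measurableSet_bddAbove_range hS)
    (ext fun x => bddAbove_range_birkhoffSum_apply_iff x)).resolve_right fun hunbdd => ?_
  refine hneg.not_ge (hT.toMeasurePreserving.integral_nonneg_of_ae_exists_birkhoffSum_pos hg hgi ?_)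
  filter_upwards [hunbdd] with x hx
  obtain ⟨_, ⟨n, rfl⟩, hn⟩ := not_bddAbove_iff.1 hx 0
  exact ⟨n, hn⟩

variable [IsProbabilityMeasure μ]

theorem Ergodic.ae_eventually_birkhoffAverage_lt (hT : Ergodic T μ) (hg : Measurable g)
    (hgi : Integrable g μ) {c : ℝ} (hc : ∫ x, g x ∂μ < c) :
    ∀ᵐ x ∂μ, ∀ᶠ n in atTop, birkhoffAverage ℝ T g n x < c := by
  obtain ⟨c₀, hgc₀, hc₀c⟩ := exists_between hc
  have hbdd := hT.ae_bddAbove_birkhoffSum (g := fun x => g x - c₀) (hg.sub_const c₀)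
    (hgi.sub (integrable_const c₀)) (by simpa [integral_sub hgi (integrable_const c₀)])
  filter_upwards [hbdd] with x ⟨K, hK⟩
  have hsum (n : ℕ) : birkhoffSum T g n x ≤ n * c₀ + K := by
    have := hK ⟨n, rfl⟩
    simp only [birkhoffSum, Finset.sum_sub_distrib, Finset.sum_const, Finset.card_range,
      nsmul_eq_mul] at this
    simp only [birkhoffSum]
    linarith
  filter_upwards [(tendsto_const_div_atTop_nhds_zero_nat K).eventually (gt_mem_nhds
    (sub_pos.2 hc₀c)), eventually_gt_atTop 0] with n hKn hn
  have hn' : (0 : ℝ) < n := Nat.cast_pos.2 hn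
  calc birkhoffAverage ℝ T g n x = birkhoffSum T g n x / n := by
        rw [birkhoffAverage, smul_eq_mul, inv_mul_eq_div]
    _ ≤ (n * c₀ + K) / n := by gcongr; exact hsum n
    _ = c₀ + K / n := by field_simp
    _ < c := by linarith

theorem Ergodic.ae_tendsto_birkhoffAverage (hT : Ergodic T μ) (hg : Measurable g)
    (hgi : Integrable g μ) :
    ∀ᵐ x ∂μ, Tendsto (birkhoffAverage ℝ T g · x) atTop (𝓝 (∫ x, g x ∂μ)) := by
  have hupper : ∀ᵐ x ∂μ, ∀ q : ℚ, ∫ x, g x ∂μ < q →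
      ∀ᶠ n in atTop, birkhoffAverage ℝ T g n x < q :=
    ae_all_iff.2 fun q => eventually_imp_distrib_left.2 (hT.ae_eventually_birkhoffAverage_lt hg hgi)
  have hlower : ∀ᵐ x ∂μ, ∀ q : ℚ, (q : ℝ) < ∫ x, g x ∂μ →
      ∀ᶠ n in atTop, (q : ℝ) < birkhoffAverage ℝ T g n x := by
    refine ae_all_iff.2 fun q => eventually_imp_distrib_left.2 fun hq => ?_
    have := hT.ae_eventually_birkhoffAverage_lt (c := -q) hg.neg hgi.neg
      (by simpa [integral_neg] using hq)
    simpa [birkhoffAverage_neg] using this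
  filter_upwards [hupper, hlower] with x hup hlo
  refine tendsto_order.2 ⟨fun a ha => ?_, fun b hb => ?_⟩
  · obtain ⟨q, haq, hq⟩ := exists_rat_btwn ha
    exact (hlo q hq).mono fun _ hn => haq.trans hn
  · obtain ⟨q, hq, hqb⟩ := exists_rat_btwn hb
    exact (hup q hq).mono fun _ hn => hn.trans hqb

end Birkhoff

noncomputable def sampleMean {β : Type*} (y : ℕ → β) (g : β → ℝ) (n : ℕ) : ℝ :=
  1 / (n : ℝ) * ∑ i ∈ Finset.range n, g (y i)

section SampleMean

variable {β : Type*}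

lemma sampleMean_mono {y : ℕ → β} {g h : β → ℝ} (hgh : ∀ x, g x ≤ h x) (n : ℕ) :
    sampleMean y g n ≤ sampleMean y h n :=
  mul_le_mul_of_nonneg_left (Finset.sum_le_sum fun i _ => hgh (y i)) (by positivity)

variable [MeasurableSpace β]

theorem Ergodic.ae_tendsto_sampleMean_comp {Ω : Type*} [MeasurableSpace Ω] {P : Measure Ω}
    [IsProbabilityMeasure P] {T : Ω → Ω} (hT : Ergodic T P) {f : Ω → β} (hf : Measurable f)
    {h : β → ℝ} (hh : Measurable h) (hhi : Integrable h (P.map f)) :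
    ∀ᵐ ω ∂P, Tendsto (sampleMean (fun i => f (T^[i] ω)) h) atTop (𝓝 (∫ x, h x ∂P.map f)) := by
  rw [integral_map hf.aemeasurable hh.aestronglyMeasurable]
  have hhf := (integrable_map_measure hh.aestronglyMeasurable hf.aemeasurable).1 hhi
  filter_upwards [hT.ae_tendsto_birkhoffAverage (hh.comp hf) hhf] with ω hω
  exact hω.congr fun n => by
    simp only [birkhoffAverage, birkhoffSum, sampleMean, smul_eq_mul, one_div, Function.comp_apply]

theorem eventually_forall_abs_sampleMean_sub_integral_le {μ : Measure β} {y : ℕ → β}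
    {𝒢 : Set (β → ℝ)} {B : Finset ((β → ℝ) × (β → ℝ))} {η δ : ℝ}
    (h𝒢 : ∀ g ∈ 𝒢, Integrable g μ)
    (hB : ∀ p ∈ B, Integrable p.1 μ ∧ Integrable p.2 μ ∧ ∫ x, (p.2 x - p.1 x) ∂μ ≤ η)
    (hcover : ∀ g ∈ 𝒢, ∃ p ∈ B, ∀ x, p.1 x ≤ g x ∧ g x ≤ p.2 x)
    (hconv : ∀ p ∈ B, Tendsto (sampleMean y p.1) atTop (𝓝 (∫ x, p.1 x ∂μ)) ∧
      Tendsto (sampleMean y p.2) atTop (𝓝 (∫ x, p.2 x ∂μ)))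
    (hδ : 0 < δ) :
    ∀ᶠ n in atTop, ∀ g ∈ 𝒢, |sampleMean y g n - ∫ x, g x ∂μ| ≤ δ + η := by
  have hclose {h : β → ℝ} (hh : Tendsto (sampleMean y h) atTop (𝓝 (∫ x, h x ∂μ))) :
      ∀ᶠ n in atTop, |sampleMean y h n - ∫ x, h x ∂μ| ≤ δ :=
    (hh.eventually (Metric.closedBall_mem_nhds _ hδ)).mono fun _ hn => by
      rwa [Real.dist_eq] at hn
  filter_upwards [eventually_all_finset B |>.2 fun p hp =>
    (hclose (hconv p hp).1).and (hclose (hconv p hp).2)] with n hn g hg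
  obtain ⟨p, hp, hpg⟩ := hcover g hg
  obtain ⟨hl, hu, hη⟩ := hB p hp
  have hmean_l := sampleMean_mono (y := y) (fun x => (hpg x).1) n
  have hmean_u := sampleMean_mono (y := y) (fun x => (hpg x).2) n
  have hint_l := integral_mono hl (h𝒢 g hg) fun x => (hpg x).1
  have hint_u := integral_mono (h𝒢 g hg) hu fun x => (hpg x).2
  rw [integral_sub hu hl] at hη
  obtain ⟨herr_l, herr_u⟩ := hn p hp
  rw [abs_le] at herr_l herr_u ⊢
  constructor <;> linarith [herr_l.1, herr_l.2, herr_u.1, herr_u.2]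

end SampleMean

/-- Uniform ergodic theorem under finite `L¹(μ)` bracketing: for a stationary ergodic real
sequence `Y_i = f ∘ T^(i-1)` with marginal `μ`, and a family `𝒢` of integrable Borel
functions admitting finite `ε`-brackets in `L¹(μ)` for every `ε > 0`, the empirical averages
converge to the expectations uniformly over `𝒢`, almost surely. -/
theorem ergodic_unif_bracketing
    {Ω : Type*} [MeasurableSpace Ω] (P : Measure Ω) [IsProbabilityMeasure P]
    (T : Ω → Ω) (hT : Ergodic T P)
    (f : Ω → ℝ) (hf : Measurable f)
    (𝒢 : Set (ℝ → ℝ))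
    (h𝒢 : ∀ g ∈ 𝒢, Measurable g ∧ Integrable g (P.map f))
    (hbracket : ∀ ε > (0 : ℝ), ∃ B : Finset ((ℝ → ℝ) × (ℝ → ℝ)),
      (∀ p ∈ B, Measurable p.1 ∧ Measurable p.2 ∧
        Integrable p.1 (P.map f) ∧ Integrable p.2 (P.map f) ∧
        ∫ x, (p.2 x - p.1 x) ∂(P.map f) ≤ ε) ∧
      ∀ g ∈ 𝒢, ∃ p ∈ B, ∀ x : ℝ, p.1 x ≤ g x ∧ g x ≤ p.2 x) :
    ∀ᵐ ω ∂P, ∀ ε > (0 : ℝ), ∀ᶠ n : ℕ in atTop, ∀ g ∈ 𝒢,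
      |(1 / (n : ℝ)) * ∑ i ∈ Finset.range n, g (f (T^[i] ω))
        - ∫ x, g x ∂(P.map f)| ≤ ε := by
  choose B hB hcover using fun k : ℕ => hbracket (1 / (k + 1)) Nat.one_div_pos_of_nat
  have hconv : ∀ᵐ ω ∂P, ∀ k, ∀ p ∈ B k,
      Tendsto (sampleMean (fun i => f (T^[i] ω)) p.1) atTop (𝓝 (∫ x, p.1 x ∂P.map f)) ∧
      Tendsto (sampleMean (fun i => f (T^[i] ω)) p.2) atTop (𝓝 (∫ x, p.2 x ∂P.map f)) := by
    refine ae_all_iff.2 fun k => (eventually_all_finset (B k)).2 fun p hp => ?_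
    obtain ⟨hl, hu, hli, hui, -⟩ := hB k p hp
    exact (hT.ae_tendsto_sampleMean_comp hf hl hli).and (hT.ae_tendsto_sampleMean_comp hf hu hui)
  filter_upwards [hconv] with ω hω ε hε
  obtain ⟨k, hk⟩ := exists_nat_one_div_lt (half_pos hε)
  filter_upwards [eventually_forall_abs_sampleMean_sub_integral_le (fun g hg => (h𝒢 g hg).2)
    (fun p hp => (hB k p hp).2.2) (hcover k) (hω k) (half_pos hε)] with n hn g hg
  exact (hn g hg).trans (by linarith)
end
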